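/- Let Φ : ℝⁿ × ℝ → ℝⁿ be a C² map, and let x₀ ∈ ℝⁿ, t₀ ∈ ℝ satisfy ∂Φ/∂t(x₀, t₀) = 0, with the linear map ∂²Φ/∂x∂t(x₀, t₀) : ℝⁿ → ℝⁿ (the derivative in x at x₀ of x ↦ ∂Φ/∂t(x, t₀)) non-singular. Then there exist η > 0 and a continuous map z : (−η, η) → ℝⁿ with z(0) = x₀ such that for every δ ∈ (−η, η), Φ(z(δ), t₀ + δ) = Φ(z(δ), t₀ − δ). In particular, for every 0 < δ < η the point z(δ) gives a loop of period 2δ, and z(δ) → x₀ as δ → 0. -/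

import Mathlib

/-!
Write `Φ (x, t₀ + δ) - Φ (x, t₀ - δ) = 2δ • G (δ, x)`, where `G (δ, x)` is the mean of `∂ₜΦ (x, ·)`
over `[t₀ - δ, t₀ + δ]`. Differentiating under the integral, `G` is `C¹` because `Φ` is `C²`, and
`G (0, x) = ∂ₜΦ (x, t₀)`; so `G (0, x₀) = 0` and `∂ₓG (0, x₀)` is the non-singular mixed
derivative. The implicit function theorem gives a `C¹` solution `z` of `G (δ, z δ) = 0` near `0`.
-/

open Set Filter Topology Metric intervalIntegral

theorem ContinuousLinearMap.IsInvertible.of_bijective {𝕜 E F : Type*} [NontriviallyNormedField 𝕜]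
    [NormedAddCommGroup E] [NormedSpace 𝕜 E] [CompleteSpace E]
    [NormedAddCommGroup F] [NormedSpace 𝕜 F] [CompleteSpace F]
    {f : E →L[𝕜] F} (hf : Function.Bijective f) : f.IsInvertible :=
  ⟨.ofBijective f (LinearMap.ker_eq_bot.2 hf.1) (LinearMap.range_eq_top.2 hf.2),
    ContinuousLinearEquiv.coe_ofBijective _ _ _⟩

section ParametricIntegral

variable {H E : Type*} [NormedAddCommGroup H] [NormedSpace ℝ H] [ProperSpace H]
  [NormedAddCommGroup E] [NormedSpace ℝ E]

theorem hasFDerivAt_intervalIntegral_of_contDiff {F : H × ℝ → E} (hF : ContDiff ℝ 1 F)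
    (a b : ℝ) (p : H) :
    HasFDerivAt (fun q => ∫ t in a..b, F (q, t))
      (∫ t in a..b, fderiv ℝ F (p, t) ∘L .inl ℝ H ℝ) p := by
  have hF' : Continuous fun x : H × ℝ => fderiv ℝ F x ∘L .inl ℝ H ℝ :=
    (hF.continuous_fderiv one_ne_zero).clm_comp continuous_const
  obtain ⟨C, hC⟩ := ((isCompact_closedBall p 1).prod isCompact_uIcc).exists_bound_of_continuousOn
    hF'.continuousOn
  refine hasFDerivAt_integral_of_dominated_of_fderiv_le (F := fun q t => F (q, t))
    (F' := fun q t => fderiv ℝ F (q, t) ∘L .inl ℝ H ℝ) (bound := fun _ => C)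
    (ball_mem_nhds p one_pos) ?_ ?_ ?_ ?_ intervalIntegrable_const ?_
  · exact .of_forall fun q => (hF.continuous.comp (.prodMk_right q)).aestronglyMeasurable
  · exact (hF.continuous.comp (.prodMk_right p)).intervalIntegrable _ _
  · exact (hF'.comp (.prodMk_right p)).aestronglyMeasurable
  · exact .of_forall fun t ht q hq =>
      hC (q, t) ⟨ball_subset_closedBall hq, uIoc_subset_uIcc ht⟩
  · exact .of_forall fun t _ q _ =>
      (hF.differentiable one_ne_zero _).hasFDerivAt.comp q (hasFDerivAt_prodMk_left q t)

theorem contDiff_intervalIntegral_of_contDiff {F : H × ℝ → E} (hF : ContDiff ℝ 1 F)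
    (a b : ℝ) : ContDiff ℝ 1 fun q => ∫ t in a..b, F (q, t) := by
  have hderiv := hasFDerivAt_intervalIntegral_of_contDiff hF a b
  rw [contDiff_one_iff_fderiv, funext fun p => (hderiv p).fderiv]
  exact ⟨fun p => (hderiv p).differentiableAt,
    continuous_parametric_intervalIntegral_of_continuous'
      ((hF.continuous_fderiv one_ne_zero).clm_comp continuous_const) a b⟩

end ParametricIntegral

section SymmetricMean

variable {E F : Type*} [NormedAddCommGroup E] [NormedSpace ℝ E]
  [NormedAddCommGroup F] [NormedSpace ℝ F]

theorem DifferentiableAt.hasDerivAt_comp_prodMk {Φ : E × ℝ → F} {x : E} {t : ℝ}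
    (h : DifferentiableAt ℝ Φ (x, t)) :
    HasDerivAt (fun s => Φ (x, s)) (fderiv ℝ Φ (x, t) (0, 1)) t :=
  h.hasFDerivAt.comp_hasDerivAt t ((hasDerivAt_const t x).prodMk (hasDerivAt_id t))

/-- The mean of `∂ₜΦ (x, ·)` over `[t₀ - δ, t₀ + δ]`, at `p = (δ, x)`: the parameter comes first
so that the implicit function is `δ ↦ x`. -/
noncomputable def symmetricMeanDeriv (Φ : E × ℝ → F) (t₀ : ℝ) (p : ℝ × E) : F :=
  ∫ s in (0 : ℝ)..1, fderiv ℝ Φ (p.2, t₀ - p.1 + s * (2 * p.1)) (0, 1)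

theorem smul_symmetricMeanDeriv [CompleteSpace F] {Φ : E × ℝ → F} (hΦ : ContDiff ℝ 1 Φ)
    (t₀ δ : ℝ) (x : E) :
    (2 * δ) • symmetricMeanDeriv Φ t₀ (δ, x) = Φ (x, t₀ + δ) - Φ (x, t₀ - δ) := by
  have hftc := integral_unitInterval_deriv_eq_sub (f := fun s => Φ (x, s))
    (f' := fun s => fderiv ℝ Φ (x, s) (0, 1)) (z₀ := t₀ - δ) (z₁ := 2 * δ) (by fun_prop)
    fun s _ => (hΦ.differentiable one_ne_zero _).hasDerivAt_comp_prodMk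
  simpa [symmetricMeanDeriv, smul_eq_mul, show t₀ - δ + 2 * δ = t₀ + δ by ring] using hftc

theorem symmetricMeanDeriv_zero [CompleteSpace F] {Φ : E × ℝ → F} {t₀ : ℝ} {x : E}
    (h : DifferentiableAt ℝ Φ (x, t₀)) :
    symmetricMeanDeriv Φ t₀ (0, x) = deriv (fun s => Φ (x, s)) t₀ := by
  simp [symmetricMeanDeriv, h.hasDerivAt_comp_prodMk.deriv, integral_const]

theorem contDiff_symmetricMeanDeriv [ProperSpace E] {Φ : E × ℝ → F} (hΦ : ContDiff ℝ 2 Φ)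
    (t₀ : ℝ) : ContDiff ℝ 1 (symmetricMeanDeriv Φ t₀) := by
  have hD : ContDiff ℝ 1 fun p => fderiv ℝ Φ p (0, 1) :=
    (hΦ.fderiv_right (by norm_num)).clm_apply contDiff_const
  exact contDiff_intervalIntegral_of_contDiff
    (F := fun q : (ℝ × E) × ℝ => fderiv ℝ Φ (q.1.2, t₀ - q.1.1 + q.2 * (2 * q.1.1)) (0, 1))
    (hD.comp (by fun_prop)) 0 1

end SymmetricMean

/-- **Implicit-function-theorem step: a continuous family of symmetric loops.**
If `Φ : ℝⁿ × ℝ → ℝⁿ` is `C²`, `∂Φ/∂t (x₀, t₀) = 0`, and the mixed partial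
derivative `∂²Φ/∂x∂t (x₀, t₀)` is non-singular, then there are `η > 0` and a
map `z` continuous on `(-η, η)` with `z 0 = x₀` such that
`Φ (z δ, t₀ + δ) = Φ (z δ, t₀ - δ)` for every `δ ∈ (-η, η)`. -/
theorem continuous_family_of_loops
    (n : ℕ) (Φ : EuclideanSpace ℝ (Fin n) × ℝ → EuclideanSpace ℝ (Fin n))
    (hΦ : ContDiff ℝ 2 Φ)
    (x₀ : EuclideanSpace ℝ (Fin n)) (t₀ : ℝ)
    (hstat : deriv (fun s => Φ (x₀, s)) t₀ = 0)
    (hns : Function.Bijective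
      ⇑(fderiv ℝ (fun x => deriv (fun s => Φ (x, s)) t₀) x₀)) :
    ∃ η > 0, ∃ z : ℝ → EuclideanSpace ℝ (Fin n),
      ContinuousOn z (Set.Ioo (-η) η) ∧ z 0 = x₀ ∧
      ∀ δ ∈ Set.Ioo (-η) η, Φ (z δ, t₀ + δ) = Φ (z δ, t₀ - δ) := by
  set G := symmetricMeanDeriv Φ t₀
  have hG : ContDiff ℝ 1 G := contDiff_symmetricMeanDeriv hΦ t₀
  have hG₀ : (fun x => G (0, x)) = fun x => deriv (fun s => Φ (x, s)) t₀ :=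
    funext fun x => symmetricMeanDeriv_zero (hΦ.differentiable two_ne_zero _)
  have hinv : (fderiv ℝ G (0, x₀) ∘L .inr ℝ ℝ _).IsInvertible := by
    rw [← ((hG.differentiable one_ne_zero _).hasFDerivAt.comp x₀
      (hasFDerivAt_prodMk_right 0 x₀)).fderiv]
    exact .of_bijective (by simpa [Function.comp_def, hG₀] using hns)
  set z := hG.contDiffAt.implicitFunction one_ne_zero hinv
  have hroot : ∀ᶠ δ in 𝓝 0, G (δ, z δ) = 0 := by
    simpa [congrFun hG₀ x₀, hstat] using
      hG.contDiffAt.eventually_apply_implicitFunction one_ne_zero hinv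
  have hcont : ∀ᶠ δ in 𝓝 0, ContinuousAt z δ :=
    ((hG.contDiffAt.contDiffAt_implicitFunction one_ne_zero hinv).eventually (by simp)).mono
      fun _ h => h.continuousAt
  obtain ⟨η, hη, hball⟩ := eventually_nhds_iff_ball.1 (hroot.and hcont)
  simp only [Real.ball_eq_Ioo, zero_sub, zero_add] at hball
  refine ⟨η, hη, z, fun δ hδ => (hball δ hδ).2.continuousWithinAt,
    hG.contDiffAt.implicitFunction_apply_self one_ne_zero hinv, fun δ hδ => ?_⟩
  rw [← sub_eq_zero, ← smul_symmetricMeanDeriv (hΦ.of_le one_le_two)]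
  exact smul_eq_zero_of_right _ (hball δ hδ).1
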